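/- For every n ≥ 2, if H ⊆ P satisfies condition (H1) in the incidence geometry G_n, then the number N_2 of lines fully contained in H satisfies 6·N_2 = (4^{n−1} − 1)·(3|H| − (4^n − 1)). -/

import Mathlib

/-- The symplectic vector space `V_n = (ZMod 2)^(2n)` of the n-qubit real Pauli group. -/
abbrev V (n : ℕ) : Type := Fin (2 * n) → ZMod 2

/-- The index `2i-1` (0-based: `2i`). -/
def i0 {n : ℕ} (i : Fin n) : Fin (2 * n) := ⟨2 * i.1, by have := i.isLt; omega⟩

/-- The index `2i` (0-based: `2i+1`). -/
def i1 {n : ℕ} (i : Fin n) : Fin (2 * n) := ⟨2 * i.1 + 1, by have := i.isLt; omega⟩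

/-- The symplectic form `⟨x,y⟩ = Σ_{i=1}^n (x_{2i−1} y_{2i} + x_{2i} y_{2i−1})`. -/
def sform {n : ℕ} (x y : V n) : ZMod 2 :=
  ∑ i : Fin n, (x (i0 i) * y (i1 i) + x (i1 i) * y (i0 i))

/-- The point set `P = V_n \ {0}` of the incidence geometry `G_n`. -/
def P (n : ℕ) : Set (V n) := {x | x ≠ 0}

/-- The line set `L = {{a,b,a+b} : a,b ∈ P, a ≠ b, ⟨a,b⟩ = 0}` of `G_n`. -/
def Lines (n : ℕ) : Set (Set (V n)) :=
  {l | ∃ a b : V n, a ∈ P n ∧ b ∈ P n ∧ a ≠ b ∧ sform a b = 0 ∧ l = {a, b, a + b}}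

/-- A subset `H ⊆ P` satisfies condition (H1) if every line meets it in exactly
one point or is contained in it. -/
def IsH1 {n : ℕ} (H : Set (V n)) : Prop :=
  H ⊆ P n ∧ ∀ l ∈ Lines n, (H ∩ l).ncard = 1 ∨ l ⊆ H

/-- A geometric hyperplane: a subset satisfying (H1) which is not the full point set. -/
def IsHyperplane {n : ℕ} (H : Set (V n)) : Prop := IsH1 H ∧ H ≠ P n

/-- `A ⊞ B`: the complement in `P` of the symmetric difference of `A` and `B`. -/
def boxAdd {n : ℕ} (A B : Set (V n)) : Set (V n) := P n \ (symmDiff A B)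

/-- The quadratic form `Q_0(x) = Σ_{i=1}^n x_{2i−1} x_{2i}`. -/
def Q0 {n : ℕ} (x : V n) : ZMod 2 := ∑ i : Fin n, x (i0 i) * x (i1 i)

/-- The quadratic form `Q_p(x) = Q_0(x) + ⟨p,x⟩`. -/
def Qf {n : ℕ} (p x : V n) : ZMod 2 := Q0 x + sform p x

/-- The perp-set hyperplane `C_p = {x ∈ P : ⟨p,x⟩ = 0}`. -/
def Cset {n : ℕ} (p : V n) : Set (V n) := {x ∈ P n | sform p x = 0}

/-- The quadric hyperplane `H_p = {x ∈ P : Q_p(x) = 0}`. -/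
def Hset {n : ℕ} (p : V n) : Set (V n) := {x ∈ P n | Qf p x = 0}

/-- The symplectic transvection `t_p : x ↦ x + ⟨p,x⟩·p`. -/
def tv {n : ℕ} (p : V n) (x : V n) : V n := x + sform p x • p

/-!
Double counting of incident point–line pairs. A point `p ≠ 0` lies on exactly `4^(n-1) - 1`
lines, because the lines through `p` pair off the `2^(2n-1) - 2` points of `p^⊥ \ {0, p}`.
Hence `∑_l |S ∩ l| = |S| (4^(n-1) - 1)` for every `S ⊆ P`. For `S = P` each line contributes `3`;
for `S = H`, by (H1), lines inside `H` contribute `3` and all other lines `1`. Eliminating the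
number of lines between these two identities gives the formula.
-/

open Finset
open scoped Classical

lemma two_mul_card_filter_eq_zero {G : Type*} [AddCommGroup G] [Fintype G] (f : G →+ ZMod 2)
    (hf : Function.Surjective f) : 2 * #{x | f x = 0} = Fintype.card G := by
  have key := f.ker.card_mul_index
  rw [AddSubgroup.index_ker, AddMonoidHom.range_eq_top.mpr hf, AddSubgroup.card_top,
    Nat.card_zmod, Nat.card_eq_fintype_card, Nat.card_eq_fintype_card] at key
  rw [← key, mul_comm, ← Fintype.card_subtype]
  exact congrArg (· * 2) (Fintype.card_congr (Equiv.refl _))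

section Symplectic

variable {n : ℕ}

lemma add_add_self_left (a b : V n) : a + (a + b) = b := by
  rw [← add_assoc, ZModModule.add_self, zero_add]

lemma add_ne_zero_of_ne {a b : V n} (h : a ≠ b) : a + b ≠ 0 := by
  rwa [Ne, add_eq_zero_iff_eq_neg, ZModModule.neg_eq_self]

lemma sform_comm (x y : V n) : sform x y = sform y x := by
  unfold sform
  exact sum_congr rfl fun i _ => by ring

lemma sform_add_right (x y z : V n) : sform x (y + z) = sform x y + sform x z := by
  simp only [sform, Pi.add_apply, ← sum_add_distrib]
  exact sum_congr rfl fun i _ => by ring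

lemma sform_self (x : V n) : sform x x = 0 := by
  unfold sform
  exact sum_eq_zero fun i _ => by rw [mul_comm (x (i1 i))]; exact ZModModule.add_self _

lemma sform_add_self_right (p q : V n) : sform p (p + q) = sform p q := by
  rw [sform_add_right, sform_self, zero_add]

lemma sform_single_i0 (x : V n) (i : Fin n) : sform x (Pi.single (i0 i) 1) = x (i1 i) := by
  rw [sform, sum_eq_single i
    (fun j _ hj => by simp [Pi.single_apply, i0, i1, Fin.ext_iff] at hj ⊢; grind) (by simp)]
  simp [i0, i1, Fin.ext_iff]

lemma sform_single_i1 (x : V n) (i : Fin n) : sform x (Pi.single (i1 i) 1) = x (i0 i) := by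
  rw [sform, sum_eq_single i
    (fun j _ hj => by simp [Pi.single_apply, i0, i1, Fin.ext_iff] at hj ⊢; grind) (by simp)]
  simp [i0, i1, Fin.ext_iff]

lemma exists_i0_or_i1_eq (j : Fin (2 * n)) : ∃ i : Fin n, i0 i = j ∨ i1 i = j := by
  refine ⟨⟨j / 2, by omega⟩, ?_⟩
  simp only [i0, i1, Fin.ext_iff]
  omega

lemma exists_sform_eq_one {p : V n} (hp : p ≠ 0) : ∃ e, sform p e = 1 := by
  have eq_one : ∀ c : ZMod 2, c ≠ 0 → c = 1 := by decide
  obtain ⟨j, hj⟩ := Function.ne_iff.mp hp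
  obtain ⟨i, rfl | rfl⟩ := exists_i0_or_i1_eq j
  · exact ⟨_, (sform_single_i1 p i).trans (eq_one _ hj)⟩
  · exact ⟨_, (sform_single_i0 p i).trans (eq_one _ hj)⟩

lemma two_mul_card_sform_eq_zero {p : V n} (hp : p ≠ 0) : 2 * #{x | sform p x = 0} = 4 ^ n := by
  have hsurj : Function.Surjective (AddMonoidHom.mk' (sform p) (sform_add_right p)) := by
    obtain ⟨e, he⟩ := exists_sform_eq_one hp
    intro c
    fin_cases c
    · exact ⟨0, (by simp [sform] : sform p 0 = 0)⟩
    · exact ⟨e, he⟩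
  have := two_mul_card_filter_eq_zero _ hsurj
  simp only [AddMonoidHom.mk'_apply] at this
  rw [this]
  simp [pow_mul]

end Symplectic

section Lines

variable {n : ℕ}

noncomputable def linesFinset (n : ℕ) : Finset (Set (V n)) := {l | l ∈ Lines n}

noncomputable def orthPts (p : V n) : Finset (V n) := {q | q ≠ 0 ∧ q ≠ p ∧ sform p q = 0}

lemma mem_orthPts {p q : V n} : q ∈ orthPts p ↔ q ≠ 0 ∧ q ≠ p ∧ sform p q = 0 := by
  simp [orthPts]

lemma add_mem_orthPts {p q : V n} (hq : q ∈ orthPts p) : p + q ∈ orthPts p := by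
  obtain ⟨hq0, hqp, hpq⟩ := mem_orthPts.mp hq
  refine mem_orthPts.mpr ⟨add_ne_zero_of_ne hqp.symm, fun h => hq0 ?_, by
    rwa [sform_add_self_right]⟩
  rw [← add_add_self_left p q, h, ZModModule.add_self]

lemma card_orthPts_add_two {p : V n} (hp : p ≠ 0) : #(orthPts p) + 2 = 2 * 4 ^ (n - 1) := by
  have hsplit : ({x | sform p x = 0} : Finset (V n)) = insert 0 (insert p (orthPts p)) := by
    ext x
    simp only [mem_filter, mem_univ, true_and, Finset.mem_insert, mem_orthPts]
    constructor
    · intro hx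
      tauto
    · rintro (rfl | rfl | ⟨-, -, hx⟩)
      · simp [sform]
      · exact sform_self x
      · exact hx
  have hcard := two_mul_card_sform_eq_zero hp
  rw [hsplit, card_insert_of_notMem (by simp [orthPts, Ne.symm hp]),
    card_insert_of_notMem (by simp [orthPts])] at hcard
  have hn : n ≠ 0 := by
    rintro rfl
    exact hp (funext fun i => absurd i.isLt (by simp))
  have h4 : 4 ^ n = 4 * 4 ^ (n - 1) := by
    rw [← pow_succ']
    congr 1
    omega
  omega

lemma mem_Lines_of_mem_orthPts {p q : V n} (hp : p ≠ 0) (hq : q ∈ orthPts p) :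
    ({p, q, p + q} : Set (V n)) ∈ Lines n := by
  obtain ⟨hq0, hqp, hpq⟩ := mem_orthPts.mp hq
  exact ⟨p, q, hp, hq0, hqp.symm, hpq, rfl⟩

lemma exists_mem_orthPts_of_mem_Lines {p : V n} {l : Set (V n)} (hl : l ∈ Lines n)
    (hp : p ∈ l) : ∃ q ∈ orthPts p, l = {p, q, p + q} := by
  obtain ⟨a, b, ha, hb, hab, hs, rfl⟩ := hl
  rcases hp with rfl | rfl | rfl
  · exact ⟨b, mem_orthPts.mpr ⟨hb, hab.symm, hs⟩, rfl⟩
  · refine ⟨a, mem_orthPts.mpr ⟨ha, hab, by rwa [sform_comm]⟩, ?_⟩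
    rw [Set.insert_comm, add_comm]
  · refine ⟨a, mem_orthPts.mpr ⟨ha, fun h => hb ?_, ?_⟩, ?_⟩
    · rw [← add_add_self_left a b, ← h, ZModModule.add_self]
    · rw [sform_comm, sform_add_self_right, hs]
    · rw [add_comm (a + b) a, add_add_self_left]
      ext x
      simp only [Set.mem_insert_iff, Set.mem_singleton_iff]
      tauto

lemma line_eq_of_mem_orthPts {p q r : V n} (hr : r ∈ orthPts p)
    (hrl : r ∈ ({p, q, p + q} : Set (V n))) : ({p, r, p + r} : Set (V n)) = {p, q, p + q} := by
  rcases hrl with rfl | rfl | rfl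
  · exact absurd rfl (mem_orthPts.mp hr).2.1
  · rfl
  · rw [add_add_self_left, Set.pair_comm]

lemma filter_mem_line_eq {p q : V n} (hq : q ∈ orthPts p) :
    {r ∈ orthPts p | r ∈ ({p, q, p + q} : Set (V n))} = {q, p + q} := by
  ext r
  simp only [mem_filter, Set.mem_insert_iff, Set.mem_singleton_iff, Finset.mem_insert,
    Finset.mem_singleton]
  constructor
  · rintro ⟨hr, rfl | h⟩
    · exact absurd rfl (mem_orthPts.mp hr).2.1
    · exact h
  · rintro (rfl | rfl)
    · exact ⟨hq, by simp⟩
    · exact ⟨add_mem_orthPts hq, by simp⟩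

lemma card_orthPts_eq_two_mul {p : V n} (hp : p ≠ 0) :
    #(orthPts p) = 2 * #{l ∈ linesFinset n | p ∈ l} := by
  have hcount := sum_card_bipartiteAbove_eq_sum_card_bipartiteBelow
    (fun q (l : Set (V n)) => q ∈ l) (s := orthPts p) (t := {l ∈ linesFinset n | p ∈ l})
  have hone : ∀ q ∈ orthPts p,
      #(bipartiteAbove (fun q l => q ∈ l) {l ∈ linesFinset n | p ∈ l} q) = 1 := by
    intro q hq
    rw [card_eq_one]
    refine ⟨{p, q, p + q}, ?_⟩
    ext l
    simp only [bipartiteAbove, linesFinset, mem_filter, mem_univ, true_and, Finset.mem_singleton]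
    constructor
    · rintro ⟨⟨hl, hpl⟩, hql⟩
      obtain ⟨r, hr, rfl⟩ := exists_mem_orthPts_of_mem_Lines hl hpl
      exact (line_eq_of_mem_orthPts hq hql).symm
    · rintro rfl
      exact ⟨⟨mem_Lines_of_mem_orthPts hp hq, by simp⟩, by simp⟩
  have htwo : ∀ l ∈ {l ∈ linesFinset n | p ∈ l},
      #(bipartiteBelow (fun q l => q ∈ l) (orthPts p) l) = 2 := by
    intro l hl
    simp only [linesFinset, mem_filter, mem_univ, true_and] at hl
    obtain ⟨q, hq, rfl⟩ := exists_mem_orthPts_of_mem_Lines hl.1 hl.2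
    have hne : q ≠ p + q := fun h => hp (by
      rw [← add_zero p, ← ZModModule.add_self q, ← add_assoc, ← h])
    simp only [bipartiteBelow]
    convert card_pair hne using 2
    exact filter_mem_line_eq hq
  rw [sum_congr rfl hone, sum_congr rfl htwo, sum_const, sum_const, smul_eq_mul,
    smul_eq_mul, mul_one] at hcount
  rw [hcount, mul_comm]

lemma card_linesThrough_add_one {p : V n} (hp : p ≠ 0) :
    #{l ∈ linesFinset n | p ∈ l} + 1 = 4 ^ (n - 1) := by
  have := card_orthPts_add_two hp
  rw [card_orthPts_eq_two_mul hp] at this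
  omega

lemma sum_ncard_inter_lines {S : Set (V n)} (hS : S ⊆ P n) :
    ∑ l ∈ linesFinset n, ((S ∩ l).ncard : ℤ) = S.ncard * (4 ^ (n - 1) - 1) := by
  have hcount := sum_card_bipartiteAbove_eq_sum_card_bipartiteBelow
    (fun p (l : Set (V n)) => p ∈ l) (s := S.toFinset) (t := linesFinset n)
  have hdeg : ∀ p ∈ S.toFinset,
      (#(bipartiteAbove (fun p l => p ∈ l) (linesFinset n) p) : ℤ) = 4 ^ (n - 1) - 1 := by
    intro p hp
    have := card_linesThrough_add_one (hS (Set.mem_toFinset.mp hp))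
    rw [eq_sub_iff_add_eq, bipartiteAbove]
    exact_mod_cast this
  have hinter : ∀ l ∈ linesFinset n,
      #(bipartiteBelow (fun p l => p ∈ l) S.toFinset l) = (S ∩ l).ncard := by
    intro l _
    rw [Set.ncard_eq_toFinset_card', bipartiteBelow]
    congr 1
    ext p
    simp
  rw [← sum_congr rfl (fun l hl => congrArg (Nat.cast (R := ℤ)) (hinter l hl)), ← Nat.cast_sum,
    ← hcount, Nat.cast_sum, sum_congr rfl hdeg, sum_const, Set.ncard_eq_toFinset_card' S,
    nsmul_eq_mul]

lemma ncard_of_mem_Lines {l : Set (V n)} (hl : l ∈ Lines n) : l.ncard = 3 := by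
  obtain ⟨a, b, ha, hb, hab, -, rfl⟩ := hl
  have hab' : a ≠ a + b := fun h => hb (by simpa using h)
  have hba' : b ≠ a + b := fun h => ha (by simpa using h)
  rw [Set.ncard_insert_of_notMem (by simp [hab, hab']), Set.ncard_pair hba']

lemma subset_P_of_mem_Lines {l : Set (V n)} (hl : l ∈ Lines n) : l ⊆ P n := by
  obtain ⟨a, b, ha, hb, hab, -, rfl⟩ := hl
  rintro x (rfl | rfl | rfl)
  exacts [ha, hb, add_ne_zero_of_ne hab]

lemma ncard_P_add_one (n : ℕ) : (P n).ncard + 1 = 4 ^ n := by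
  have hP : P n = {0}ᶜ := rfl
  rw [hP, Set.ncard_compl, Set.ncard_singleton, Nat.card_eq_fintype_card]
  have := Nat.one_le_pow n 4 (by norm_num)
  simp [pow_mul]
  omega

lemma sum_ncard_P_inter_lines (n : ℕ) :
    ∑ l ∈ linesFinset n, ((P n ∩ l).ncard : ℤ) = 3 * #(linesFinset n) := by
  rw [sum_congr rfl (g := fun _ => (3 : ℤ)), sum_const, nsmul_eq_mul, mul_comm]
  intro l hl
  simp only [linesFinset, mem_filter, mem_univ, true_and] at hl
  rw [Set.inter_eq_right.mpr (subset_P_of_mem_Lines hl), ncard_of_mem_Lines hl, Nat.cast_ofNat]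

lemma sum_ncard_inter_lines_of_isH1 {H : Set (V n)} (hH : IsH1 H) :
    ∑ l ∈ linesFinset n, ((H ∩ l).ncard : ℤ) =
      3 * #{l ∈ linesFinset n | l ⊆ H} + #{l ∈ linesFinset n | ¬ l ⊆ H} := by
  rw [← sum_filter_add_sum_filter_not _ (· ⊆ H)]
  have hin : ∀ l ∈ {l ∈ linesFinset n | l ⊆ H}, ((H ∩ l).ncard : ℤ) = 3 := by
    intro l hl
    simp only [linesFinset, mem_filter, mem_univ, true_and] at hl
    rw [Set.inter_eq_right.mpr hl.2, ncard_of_mem_Lines hl.1, Nat.cast_ofNat]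
  have hout : ∀ l ∈ {l ∈ linesFinset n | ¬ l ⊆ H}, ((H ∩ l).ncard : ℤ) = 1 := by
    intro l hl
    simp only [linesFinset, mem_filter, mem_univ, true_and] at hl
    rw [(hH.2 l hl.1).resolve_right hl.2, Nat.cast_one]
  rw [sum_congr rfl hin, sum_congr rfl hout, sum_const, sum_const, nsmul_eq_mul, nsmul_eq_mul,
    mul_one, mul_comm]

end Lines

theorem stmt2_general (n : ℕ) (H : Set (V n)) (hH : IsH1 H) :
    6 * ({l ∈ Lines n | l ⊆ H}.ncard : ℤ) =
      ((4 : ℤ) ^ (n - 1) - 1) * (3 * (H.ncard : ℤ) - ((4 : ℤ) ^ n - 1)) := by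
  have hN2 : {l ∈ Lines n | l ⊆ H}.ncard = #{l ∈ linesFinset n | l ⊆ H} := by
    rw [Set.ncard_eq_toFinset_card']
    congr 1
    ext l
    simp [linesFinset]
  have hcardP : ((P n).ncard : ℤ) = 4 ^ n - 1 := by
    rw [eq_sub_iff_add_eq]
    exact_mod_cast ncard_P_add_one n
  have hsplit : (#{l ∈ linesFinset n | l ⊆ H} : ℤ) + #{l ∈ linesFinset n | ¬ l ⊆ H} =
      #(linesFinset n) := by
    exact_mod_cast card_filter_add_card_filter_not _
  have hP := sum_ncard_inter_lines (subset_refl (P n))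
  rw [sum_ncard_P_inter_lines, hcardP] at hP
  have hH' := sum_ncard_inter_lines hH.1
  rw [sum_ncard_inter_lines_of_isH1 hH] at hH'
  rw [hN2]
  linear_combination 3 * hH' - 3 * hsplit - hP

theorem stmt2 (n : ℕ) (hn : 2 ≤ n) (H : Set (V n)) (hH : IsH1 H) :
    6 * ({l ∈ Lines n | l ⊆ H}.ncard : ℤ) =
      ((4 : ℤ) ^ (n - 1) - 1) * (3 * (H.ncard : ℤ) - ((4 : ℤ) ^ n - 1)) :=
  stmt2_general n H hH
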